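/- Let M > 1 and let p, q be probability mass functions on a finite set V with p(x)/q(x) ∈ [1/M, M] for all x (both strictly positive). Then the Kullback–Leibler divergence satisfies D_KL(p‖q) ≤ (log M)·(M/(M−1))·TV(p,q), where TV(p,q) = (1/2)·Σ_x |p(x) − q(x)| is the total variation distance. -/

import Mathlib

open Finset

/-- Kullback–Leibler divergence (natural log) between pmfs on a finite set. -/
noncomputable def KL {V : Type*} [Fintype V] (p q : V → ℝ) : ℝ :=
  ∑ x, p x * Real.log (p x / q x)

/-- Total variation distance between pmfs on a finite set. -/
noncomputable def TV {V : Type*} [Fintype V] (p q : V → ℝ) : ℝ :=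
  (1 / 2) * ∑ x, |p x - q x|

/-- `t ↦ t log t` is convex and vanishes at `1`, so on `[1, M]` it lies below its chord. -/
lemma mul_log_le_chord {M t : ℝ} (hM : 1 < M) (ht1 : 1 ≤ t) (htM : t ≤ M) :
    t * Real.log t ≤ Real.log M * (M / (M - 1)) * (t - 1) := by
  have hM1 : 0 < M - 1 := by linarith
  have hweights : (M - t) / (M - 1) + (t - 1) / (M - 1) = 1 := by field_simp; ring
  have hconv := Real.convexOn_mul_log.2 (Set.mem_Ici.2 zero_le_one)
    (Set.mem_Ici.2 (by linarith : (0 : ℝ) ≤ M))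
    (div_nonneg (sub_nonneg.2 htM) hM1.le) (div_nonneg (sub_nonneg.2 ht1) hM1.le) hweights
  have hcomb : (M - t) / (M - 1) * 1 + (t - 1) / (M - 1) * M = t := by field_simp; ring
  simp only [smul_eq_mul, hcomb, Real.log_one, mul_zero, zero_add] at hconv
  exact hconv.trans_eq (by ring)

lemma mul_log_div_le_mul_posPart {M a b : ℝ} (hM : 1 < M) (ha : 0 ≤ a) (hb : 0 < b)
    (hab : a / b ≤ M) :
    a * Real.log (a / b) ≤ Real.log M * (M / (M - 1)) * (a - b)⁺ := by
  rcases le_or_gt a b with hle | hlt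
  · have hlog : Real.log (a / b) ≤ 0 :=
      Real.log_nonpos (div_nonneg ha hb.le) ((div_le_one hb).2 hle)
    rw [posPart_eq_zero.2 (sub_nonpos.2 hle), mul_zero]
    exact mul_nonpos_of_nonneg_of_nonpos ha hlog
  · rw [posPart_eq_self.2 (sub_nonneg.2 hlt.le)]
    have hchord := mul_log_le_chord hM ((one_le_div hb).2 hlt.le) hab
    calc a * Real.log (a / b) = b * (a / b * Real.log (a / b)) := by field_simp
      _ ≤ b * (Real.log M * (M / (M - 1)) * (a / b - 1)) :=
        mul_le_mul_of_nonneg_left hchord hb.le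
      _ = Real.log M * (M / (M - 1)) * (a - b) := by field_simp

lemma TV_eq_sum_posPart_sub {V : Type*} [Fintype V] {p q : V → ℝ}
    (hpq : ∑ x, p x = ∑ x, q x) :
    TV p q = ∑ x, (p x - q x)⁺ := by
  have hsum : ∑ x, (p x - q x) = 0 := by rw [sum_sub_distrib, hpq, sub_self]
  have habs : ∑ x, |p x - q x| + ∑ x, (p x - q x) = 2 * ∑ x, (p x - q x)⁺ := by
    simp only [← sum_add_distrib, abs_add_eq_two_nsmul_posPart, nsmul_eq_mul, mul_sum,
      Nat.cast_ofNat]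
  rw [TV]
  linarith

/-- If `p x / q x ∈ [1/M, M]` for all `x` (both strictly positive), then
`D_KL(p‖q) ≤ (log M)·(M/(M−1))·TV(p,q)`. -/
theorem KL_le_TV_bound {V : Type*} [Fintype V] (M : ℝ) (hM : 1 < M)
    (p q : V → ℝ) (hp0 : ∀ x, 0 < p x) (hq0 : ∀ x, 0 < q x)
    (hp1 : ∑ x, p x = 1) (hq1 : ∑ x, q x = 1)
    (hratio : ∀ x, 1 / M ≤ p x / q x ∧ p x / q x ≤ M) :
    KL p q ≤ Real.log M * (M / (M - 1)) * TV p q := by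
  rw [TV_eq_sum_posPart_sub (hp1.trans hq1.symm), mul_sum]
  exact sum_le_sum fun x _ ↦
    mul_log_div_le_mul_posPart hM (hp0 x).le (hq0 x) (hratio x).2
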